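/- With F₁,...,Fₖ defined as above from δ₁,...,δₖ and O ⊆ {1,...,k}: if t₁ ∈ F₁ then there exists t ≥ t₁ and a partition of [t₁,t] into nonempty consecutive order-convex intervals I₁ < ... < Iₖ with Iⱼ ⊆ δⱼ for all j and Iⱼ a singleton for each j ∈ O. -/

import Mathlib

def Until {T : Type*} [LinearOrder T] (A B : Set T) (t : T) : Prop :=
  ∃ t', t < t' ∧ t' ∈ B ∧ ∀ y, t < y → y < t' → y ∈ A

/-- Order-convexity of a set. -/
def IsConvex {T : Type*} [LinearOrder T] (I : Set T) : Prop :=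
  ∀ a ∈ I, ∀ b ∈ I, ∀ c, a ≤ c → c ≤ b → c ∈ I

/-- (P Until* Q) holds at t: some closed interval [t,t'] with t' > t splits into
nonempty convex pieces I₁ < I₂ with I₁ ⊆ P, I₂ ⊆ Q. -/
def UntilStar {T : Type*} [LinearOrder T] (P Q : Set T) (t : T) : Prop :=
  ∃ t', t < t' ∧ ∃ I₁ I₂ : Set T,
    I₁.Nonempty ∧ I₂.Nonempty ∧ IsConvex I₁ ∧ IsConvex I₂ ∧
    I₁ ∪ I₂ = Set.Icc t t' ∧ Disjoint I₁ I₂ ∧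
    (∀ a ∈ I₁, ∀ b ∈ I₂, a < b) ∧ I₁ ⊆ P ∧ I₂ ⊆ Q

/-- A partition of [a,b] into consecutive nonempty convex intervals I 0 < I 1 < … -/
def IsDecomp {T : Type*} [LinearOrder T] (a b : T) {k : ℕ} (I : Fin k → Set T) : Prop :=
  (∀ j, (I j).Nonempty) ∧ (∀ j, IsConvex (I j)) ∧
    (∀ i j : Fin k, i < j → ∀ x ∈ I i, ∀ y ∈ I j, x < y) ∧
    (⋃ j, I j) = Set.Icc a b

/-- The defining equations of the formulas F₁,…,F_{k} from δ₁,…,δ_k and O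
 (here k = n+1, indices are 0-based). `Until ∅` expresses `False Until`,
 i.e. "the successor of t exists and lies in …". -/
def DefinesF {T : Type*} [LinearOrder T] {n : ℕ} (δ F : Fin (n + 1) → Set T)
    (O : Finset (Fin (n + 1))) : Prop :=
  F (Fin.last n) = δ (Fin.last n) ∧
    ∀ i : Fin n,
      F i.castSucc = δ i.castSucc ∩ {t |
        if i.castSucc ∈ O then
          (if i.succ ∈ O then Until (∅ : Set T) (F i.succ) t
           else Until (δ i.succ) (F i.succ) t)
        else
          (if i.succ ∈ O then Until (δ i.castSucc) (F i.succ) t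
           else UntilStar (δ i.castSucc) (F i.succ) t)}

/-
Unwinding the definition of `F 0` at `t₁` gives, in each of the four cases (`Until ∅`, `Until`
with the gap in `δ 1` or in `δ 0`, `UntilStar`), a point `t₂ > t₁` in `F 1` and a split of `[t₁, t₂]`
into convex pieces `A < B` with `A ⊆ δ 0`, `B ⊆ δ 1`, `A = {t₁}` if `0 ∈ O` and `B = {t₂}` if
`1 ∈ O`. The shifted system `δ 1, …, δ n` satisfies the same equations, so by induction `[t₂, t]`
decomposes into blocks `J`; since `t₂` lies both in `B` and in the first block of `J`, prepending
`A` and merging `B` into that block decomposes `[t₁, t]`.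
-/

open Set

section Intervals

variable {T : Type*} [LinearOrder T]

theorem isConvex_iff_ordConnected {s : Set T} : IsConvex s ↔ s.OrdConnected :=
  ⟨fun h => ⟨fun _ ha _ hb _ hc => h _ ha _ hb _ hc.1 hc.2⟩,
    fun h _ ha _ hb _ hac hcb => h.out ha hb ⟨hac, hcb⟩⟩

theorem IsConvex.union_of_mem {s t : Set T} {x : T} (hs : IsConvex s) (ht : IsConvex t)
    (hxs : x ∈ s) (hxt : x ∈ t) : IsConvex (s ∪ t) := by
  rintro a ha b hb c hac hcb
  rcases le_total c x with hcx | hxc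
  · rcases ha with ha | ha
    · exact Or.inl (hs a ha x hxs c hac hcx)
    · exact Or.inr (ht a ha x hxt c hac hcx)
  · rcases hb with hb | hb
    · exact Or.inl (hs x hxs b hb c hxc hcb)
    · exact Or.inr (ht x hxt b hb c hxc hcb)

structure IsSplit (a b : T) (A B : Set T) : Prop where
  left_mem : a ∈ A
  right_mem : b ∈ B
  isConvex_left : IsConvex A
  isConvex_right : IsConvex B
  union_eq : A ∪ B = Icc a b
  lt : ∀ x ∈ A, ∀ y ∈ B, x < y

namespace IsSplit

variable {a b : T} {A B : Set T}

theorem le (h : IsSplit a b A B) : a ≤ b :=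
  (h.lt a h.left_mem b h.right_mem).le

theorem left_subset (h : IsSplit a b A B) : A ⊆ Ico a b := fun x hx =>
  ⟨(h.union_eq ▸ Or.inl hx : x ∈ Icc a b).1, h.lt x hx b h.right_mem⟩

theorem right_subset (h : IsSplit a b A B) : B ⊆ Icc a b :=
  h.union_eq ▸ subset_union_right

end IsSplit

theorem isSplit_singleton_Ioc {a b : T} (h : a < b) : IsSplit a b {a} (Ioc a b) where
  left_mem := rfl
  right_mem := right_mem_Ioc.2 h
  isConvex_left := isConvex_iff_ordConnected.2 ordConnected_singleton
  isConvex_right := isConvex_iff_ordConnected.2 ordConnected_Ioc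
  union_eq := by rw [singleton_union, Ioc_insert_left h.le]
  lt := fun _ hx _ hy => hx ▸ hy.1

theorem isSplit_Ico_singleton {a b : T} (h : a < b) : IsSplit a b (Ico a b) {b} where
  left_mem := left_mem_Ico.2 h
  right_mem := rfl
  isConvex_left := isConvex_iff_ordConnected.2 ordConnected_Ico
  isConvex_right := isConvex_iff_ordConnected.2 ordConnected_singleton
  union_eq := by rw [union_singleton, Ico_insert_right h.le]
  lt := fun _ hx _ hy => hy ▸ hx.2

theorem UntilStar.exists_isSplit {P Q : Set T} {t : T} (h : UntilStar P Q t) :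
    ∃ t', t < t' ∧ ∃ A B, IsSplit t t' A B ∧ A ⊆ P ∧ B ⊆ Q := by
  obtain ⟨t', htt', A, B, ⟨x, hx⟩, ⟨y, hy⟩, hA, hB, hAB, -, hlt, hAP, hBQ⟩ := h
  have htA : t ∈ A := Or.resolve_right (hAB.ge (left_mem_Icc.2 htt'.le)) fun htB =>
    (hAB.le (Or.inl hx)).1.not_gt (hlt x hx t htB)
  have ht'B : t' ∈ B := Or.resolve_left (hAB.ge (right_mem_Icc.2 htt'.le)) fun ht'A =>
    (hAB.le (Or.inr hy)).2.not_gt (hlt t' ht'A y hy)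
  exact ⟨t', htt', A, B, ⟨htA, ht'B, hA, hB, hAB, hlt⟩, hAP, hBQ⟩

end Intervals

section Glue

variable {T : Type*} {k : ℕ} {A B : Set T} {J : Fin (k + 1) → Set T}

def glue (A B : Set T) (J : Fin (k + 1) → Set T) : Fin (k + 2) → Set T :=
  Fin.cons A (Fin.cons (B ∪ J 0) (Fin.tail J))

theorem glue_subset {P : Fin (k + 2) → Set T} (hA : A ⊆ P 0) (hB : B ⊆ P 1)
    (hJ : ∀ j, J j ⊆ P j.succ) (j : Fin (k + 2)) : glue A B J j ⊆ P j := by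
  revert j
  simp only [Fin.forall_fin_succ, glue, Fin.cons_zero, Fin.cons_succ, Fin.tail]
  exact ⟨hA, union_subset hB (hJ 0), fun j => hJ j.succ⟩

theorem glue_eq_singleton {S : Finset (Fin (k + 2))} {b : T} (hb : b ∈ J 0)
    (hA : 0 ∈ S → ∃ x, A = {x}) (hB : 1 ∈ S → B = {b}) (hJ : ∀ j, j.succ ∈ S → ∃ x, J j = {x}) :
    ∀ j ∈ S, ∃ x, glue A B J j = {x} := by
  simp only [Fin.forall_fin_succ, glue, Fin.cons_zero, Fin.cons_succ, Fin.tail]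
  refine ⟨hA, fun h => ?_, fun j => hJ j.succ⟩
  obtain ⟨x, hx⟩ := hJ 0 h
  rw [hx, mem_singleton_iff] at hb
  exact ⟨x, by rw [hB h, hx, hb, union_self]⟩

end Glue

section Decompositions

variable {T : Type*} [LinearOrder T] {k : ℕ}

namespace IsDecomp

variable {a b : T} {J : Fin (k + 1) → Set T}

theorem subset_Icc (hJ : IsDecomp a b J) (j : Fin (k + 1)) : J j ⊆ Icc a b :=
  hJ.2.2.2 ▸ subset_iUnion J j

theorem left_mem_zero (hJ : IsDecomp a b J) : a ∈ J 0 := by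
  obtain ⟨x, hx⟩ := hJ.1 0
  obtain ⟨hax, hxb⟩ := hJ.subset_Icc 0 hx
  obtain ⟨j, hj⟩ := mem_iUnion.1 (hJ.2.2.2.symm ▸ left_mem_Icc.2 (hax.trans hxb) : a ∈ ⋃ j, J j)
  cases j using Fin.cases with
  | zero => exact hj
  | succ j => exact absurd (hJ.2.2.1 0 j.succ (Fin.succ_pos j) x hx a hj) hax.not_gt

theorem le (hJ : IsDecomp a b J) : a ≤ b :=
  (hJ.subset_Icc 0 hJ.left_mem_zero).2

end IsDecomp

theorem isDecomp_singleton (a : T) : IsDecomp a a (fun _ : Fin 1 => {a}) :=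
  ⟨fun _ => singleton_nonempty a, fun _ => isConvex_iff_ordConnected.2 ordConnected_singleton,
    fun i j hij => absurd hij (Subsingleton.elim i j ▸ lt_irrefl i), by simp⟩

variable {a b c : T} {A B : Set T} {J : Fin (k + 1) → Set T}

theorem IsSplit.isDecomp_glue (hAB : IsSplit a b A B) (hJ : IsDecomp b c J) :
    IsDecomp a c (glue A B J) := by
  have hb := hJ.left_mem_zero
  have hbc := hJ.le
  have hJsub := hJ.subset_Icc
  obtain ⟨hne, hcvx, hord, hunion⟩ := hJ
  refine ⟨?_, ?_, ?_, ?_⟩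
  · simp only [Fin.forall_fin_succ, glue, Fin.cons_zero, Fin.cons_succ, Fin.tail]
    exact ⟨⟨a, hAB.left_mem⟩, ⟨b, Or.inl hAB.right_mem⟩, fun j => hne j.succ⟩
  · simp only [Fin.forall_fin_succ, glue, Fin.cons_zero, Fin.cons_succ, Fin.tail]
    exact ⟨hAB.isConvex_left, hAB.isConvex_right.union_of_mem (hcvx 0) hAB.right_mem hb,
      fun j => hcvx j.succ⟩
  · simp only [Fin.forall_fin_succ, glue, Fin.cons_zero, Fin.cons_succ, Fin.tail,
      Fin.succ_lt_succ_iff, Fin.succ_pos, Fin.not_lt_zero, false_implies, true_implies, true_and]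
    have hA : ∀ x ∈ A, x < b := fun x hx => (hAB.left_subset hx).2
    have hJ : ∀ j, ∀ y ∈ J j, b ≤ y := fun j y hy => (hJsub j hy).1
    refine ⟨⟨fun x hx y hy => Or.elim hy (hAB.lt x hx y) fun hy => (hA x hx).trans_le (hJ 0 y hy),
      fun i x hx y hy => (hA x hx).trans_le (hJ _ y hy)⟩, fun i x hx y hy => ?_,
      fun i i' h x hx y hy => hord _ _ (Fin.succ_lt_succ_iff.2 h) x hx y hy⟩
    rcases hx with hx | hx
    · exact (hAB.right_subset hx).2.trans_lt (hord 0 i.succ (Fin.succ_pos i) b hb y hy)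
    · exact hord 0 i.succ (Fin.succ_pos i) x hx y hy
  · rw [← Icc_union_Icc_eq_Icc hAB.le hbc, ← hAB.union_eq, ← hunion]
    ext x
    simp [glue, Fin.tail, Fin.exists_fin_succ, or_assoc]

end Decompositions

namespace DefinesF

variable {T : Type*} [LinearOrder T] {n : ℕ}

theorem subset {δ F : Fin (n + 1) → Set T} {O : Finset (Fin (n + 1))} (hF : DefinesF δ F O)
    (i : Fin (n + 1)) : F i ⊆ δ i := by
  cases i using Fin.lastCases with
  | last => exact hF.1.le
  | cast i => rw [hF.2 i]; exact inter_subset_left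

theorem tail {δ F : Fin (n + 2) → Set T} {O : Finset (Fin (n + 2))} (hF : DefinesF δ F O) :
    DefinesF (Fin.tail δ) (Fin.tail F) (Finset.univ.filter fun j => j.succ ∈ O) := by
  refine ⟨by simpa [Fin.tail, Fin.succ_last] using hF.1, fun i => ?_⟩
  simp only [Fin.tail, Fin.succ_castSucc, Finset.mem_filter, Finset.mem_univ, true_and]
  exact hF.2 i.succ

theorem exists_isSplit {δ F : Fin (n + 1) → Set T} {O : Finset (Fin (n + 1))}
    (hF : DefinesF δ F O) (i : Fin n) {t : T} (ht : t ∈ F i.castSucc) :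
    ∃ t', t < t' ∧ t' ∈ F i.succ ∧ ∃ A B, IsSplit t t' A B ∧ A ⊆ δ i.castSucc ∧
      B ⊆ δ i.succ ∧ (i.castSucc ∈ O → A = {t}) ∧ (i.succ ∈ O → B = {t'}) := by
  rw [hF.2 i] at ht
  obtain ⟨htδ, hU⟩ := ht
  have hFδ := hF.subset i.succ
  split_ifs at hU with h₀ h₁ h₁
  · obtain ⟨t', htt', ht', hgap⟩ := hU
    have hIoo : Ioo t t' = ∅ := eq_empty_of_forall_notMem fun y hy => hgap y hy.1 hy.2
    have hIoc : Ioc t t' = {t'} := by rw [← Ioo_insert_right htt', hIoo, insert_empty_eq]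
    exact ⟨t', htt', ht', _, _, hIoc ▸ isSplit_singleton_Ioc htt', singleton_subset_iff.2 htδ,
      singleton_subset_iff.2 (hFδ ht'), fun _ => rfl, fun _ => rfl⟩
  · obtain ⟨t', htt', ht', hgap⟩ := hU
    refine ⟨t', htt', ht', _, _, isSplit_singleton_Ioc htt', singleton_subset_iff.2 htδ, ?_,
      fun _ => rfl, fun h => absurd h h₁⟩
    rw [← Ioo_insert_right htt']
    exact insert_subset (hFδ ht') fun y hy => hgap y hy.1 hy.2
  · obtain ⟨t', htt', ht', hgap⟩ := hU
    refine ⟨t', htt', ht', _, _, isSplit_Ico_singleton htt', ?_, singleton_subset_iff.2 (hFδ ht'),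
      fun h => absurd h h₀, fun _ => rfl⟩
    rw [← Ioo_insert_left htt']
    exact insert_subset htδ fun y hy => hgap y hy.1 hy.2
  · obtain ⟨t', htt', A, B, hAB, hA, hB⟩ := hU.exists_isSplit
    exact ⟨t', htt', hB hAB.right_mem, A, B, hAB, hA, hB.trans hFδ, fun h => absurd h h₀,
      fun h => absurd h h₁⟩

end DefinesF

theorem stmt_14 {T : Type*} [LinearOrder T] {n : ℕ}
    (δ F : Fin (n + 1) → Set T) (O : Finset (Fin (n + 1)))
    (hF : DefinesF δ F O) (t₁ : T) (h : t₁ ∈ F 0) :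
    ∃ t, t₁ ≤ t ∧ ∃ I : Fin (n + 1) → Set T,
      IsDecomp t₁ t I ∧ (∀ j, I j ⊆ δ j) ∧ (∀ j ∈ O, ∃ x, I j = {x}) := by
  induction n generalizing t₁ with
  | zero =>
    refine ⟨t₁, le_rfl, fun _ => {t₁}, isDecomp_singleton t₁, fun j => ?_, fun _ _ => ⟨t₁, rfl⟩⟩
    rw [Fin.fin_one_eq_zero j]
    exact singleton_subset_iff.2 (hF.subset 0 h)
  | succ n ih =>
    obtain ⟨t₂, -, ht₂, A, B, hAB, hAδ, hBδ, hAO, hBO⟩ := hF.exists_isSplit 0 h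
    obtain ⟨t, -, J, hJ, hJδ, hJO⟩ := ih _ _ _ hF.tail t₂ ht₂
    have hglue := hAB.isDecomp_glue hJ
    refine ⟨t, hglue.le, glue A B J, hglue, glue_subset hAδ hBδ hJδ,
      glue_eq_singleton hJ.left_mem_zero (fun h => ⟨t₁, hAO h⟩) hBO fun j hj => hJO j ?_⟩
    simpa using hj
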